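/- Every formula of arbitrary arrow update model logic (modal logic plus arrow update modalities [U,o] and the arbitrary arrow update quantifier [↑]) is semantically equivalent to a formula of basic multi-agent modal logic. Consequently, M,s ⊨ [↑]φ iff M,s ⊨ [U,o]φ for every arrow update (U,o), without any restriction on the source and target conditions of U. -/

import Mathlib

namespace AAUML

/-- Formulas of arbitrary arrow update model logic over atoms `P` and agents `A`.
An arrow update model is encoded as a finite list of arrows
`(agent, source outcome, source condition, target outcome, target condition)`,
with outcomes drawn from `ℕ`; `upd U o φ` is `[U,o]φ` and `all φ` is `[↑]φ`. -/
inductive Form (P A : Type) : Type where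
  | atom : P → Form P A
  | neg  : Form P A → Form P A
  | and  : Form P A → Form P A → Form P A
  | box  : A → Form P A → Form P A
  | upd  : List (A × ℕ × Form P A × ℕ × Form P A) → ℕ → Form P A → Form P A
  | all  : Form P A → Form P A

/-- An arrow: agent, source outcome, source condition, target outcome, target condition. -/
abbrev Arrow (P A : Type) := A × ℕ × Form P A × ℕ × Form P A

/-- Formulas of basic multi-agent modal logic: no update modality, no quantifier. -/
inductive Form.Modal {P A : Type} : Form P A → Prop
  | atom (p : P) : Form.Modal (.atom p)
  | neg {φ : Form P A} : Form.Modal φ → Form.Modal (.neg φ)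
  | and {φ ψ : Form P A} : Form.Modal φ → Form.Modal ψ → Form.Modal (.and φ ψ)
  | box (a : A) {φ : Form P A} : Form.Modal φ → Form.Modal (.box a φ)

/-- Formulas of arrow update model logic (no arbitrary-update quantifier anywhere,
including inside the conditions of arrow update models). -/
inductive Form.NoQuant {P A : Type} : Form P A → Prop
  | atom (p : P) : Form.NoQuant (.atom p)
  | neg {φ : Form P A} : Form.NoQuant φ → Form.NoQuant (.neg φ)
  | and {φ ψ : Form P A} : Form.NoQuant φ → Form.NoQuant ψ → Form.NoQuant (.and φ ψ)
  | box (a : A) {φ : Form P A} : Form.NoQuant φ → Form.NoQuant (.box a φ)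
  | upd {U : List (Arrow P A)} (o : ℕ) {φ : Form P A} : Form.NoQuant φ →
      (∀ ar ∈ U, Form.NoQuant ar.2.2.1) → (∀ ar ∈ U, Form.NoQuant ar.2.2.2.2) →
      Form.NoQuant (.upd U o φ)

/-- Propositional formulas (no modalities at all). -/
inductive Form.Prp {P A : Type} : Form P A → Prop
  | atom (p : P) : Form.Prp (.atom p)
  | neg {φ : Form P A} : Form.Prp φ → Form.Prp (.neg φ)
  | and {φ ψ : Form P A} : Form.Prp φ → Form.Prp ψ → Form.Prp (.and φ ψ)

/-- A relational (Kripke) model. -/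
structure KModel (P A : Type) : Type 1 where
  World : Type
  R : A → World → World → Prop
  V : World → P → Prop

variable {P A : Type}

/-- Satisfaction for basic modal formulas (junk value `False` on updates/quantifiers;
only used on modal formulas). -/
def msat (M : KModel P A) : M.World → Form P A → Prop
  | s, .atom p => M.V s p
  | s, .neg φ => ¬ msat M s φ
  | s, .and φ ψ => msat M s φ ∧ msat M s ψ
  | s, .box a φ => ∀ t, M.R a s t → msat M t φ
  | _, .upd _ _ _ => False
  | _, .all _ => False

/-- Some arrow of `U` for agent `a` from outcome `o` to outcome `o'` has its (modal)
source condition true at `s` and its target condition true at `s'`. -/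
def marrowOK (M : KModel P A) (U : List (Arrow P A)) (a : A) (o o' : ℕ)
    (s s' : M.World) : Prop :=
  ∃ ψ ψ', (a, o, ψ, o', ψ') ∈ U ∧ msat M s ψ ∧ msat M s' ψ'

/-- All source and target conditions of `U` are basic modal formulas. -/
def ModalArrows (U : List (Arrow P A)) : Prop :=
  ∀ ar ∈ U, Form.Modal ar.2.2.1 ∧ Form.Modal ar.2.2.2.2

mutual
  /-- Satisfaction `M,s ⊨ φ`.  The case `upd U o φ` is interpreted in the product
  model `M*U` (inlined); `all φ` quantifies over all arrow update models with basic
  modal source and target conditions. -/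
  def Form.sat : (M : KModel P A) → M.World → Form P A → Prop
    | M, s, .atom p => M.V s p
    | M, s, .neg φ => ¬ Form.sat M s φ
    | M, s, .and φ ψ => Form.sat M s φ ∧ Form.sat M s ψ
    | M, s, .box a φ => ∀ t, M.R a s t → Form.sat M t φ
    | M, s, .upd U o φ =>
        Form.sat ⟨M.World × ℕ,
          fun a x y => M.R a x.1 y.1 ∧ satList M U a x.2 y.2 x.1 y.1,
          fun x p => M.V x.1 p⟩ (s, o) φ
    | M, s, .all φ => ∀ (U : List (Arrow P A)) (o : ℕ), ModalArrows U →
        Form.sat ⟨M.World × ℕ,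
          fun a x y => M.R a x.1 y.1 ∧ marrowOK M U a x.2 y.2 x.1 y.1,
          fun x p => M.V x.1 p⟩ (s, o) φ
  termination_by M s φ => sizeOf φ

  /-- Some arrow of the list, for agent `a`, from `o` to `o'`, has its source condition
  true at `s` and its target condition true at `s'`. -/
  def satList : (M : KModel P A) → List (Arrow P A) → A → ℕ → ℕ → M.World → M.World → Prop
    | _, [], _, _, _, _, _ => False
    | M, (b, o1, ψ, o2, ψ') :: rest, a, o, o', s, s' =>
        (b = a ∧ o1 = o ∧ o2 = o' ∧ Form.sat M s ψ ∧ Form.sat M s' ψ') ∨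
        satList M rest a o o' s s'
  termination_by M U a o o' s s' => sizeOf U
end

/-- The product `M*U` of a relational model and an arrow update model. -/
def prodModel (M : KModel P A) (U : List (Arrow P A)) : KModel P A :=
  ⟨M.World × ℕ,
   fun a x y => M.R a x.1 y.1 ∧ satList M U a x.2 y.2 x.1 y.1,
   fun x p => M.V x.1 p⟩

def Valid (φ : Form P A) : Prop := ∀ (M : KModel P A) (s : M.World), Form.sat M s φ

def Form.or (φ ψ : Form P A) : Form P A := .neg (.and (.neg φ) (.neg ψ))
def Form.imp (φ ψ : Form P A) : Form P A := .neg (.and φ (.neg ψ))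
def Form.dia (a : A) (φ : Form P A) : Form P A := .neg (.box a (.neg φ))
/-- `⟨U,o⟩φ` -/
def Form.diaUpd (U : List (Arrow P A)) (o : ℕ) (φ : Form P A) : Form P A :=
  .neg (.upd U o (.neg φ))
/-- `⟨↑⟩φ` -/
def Form.ex (φ : Form P A) : Form P A := .neg (.all (.neg φ))
/-- A canonical tautology. -/
def Form.top [Inhabited P] : Form P A := .neg (.and (.atom default) (.neg (.atom default)))
/-- Finite conjunction. -/
def Form.conj [Inhabited P] : List (Form P A) → Form P A
  | [] => Form.top
  | φ :: rest => .and φ (Form.conj rest)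

/-- `Z` is a bisimulation between `M` and `N`. -/
def IsBisim (M N : KModel P A) (Z : M.World → N.World → Prop) : Prop :=
  ∀ s s', Z s s' →
    (∀ p, M.V s p ↔ N.V s' p) ∧
    (∀ a t, M.R a s t → ∃ t', N.R a s' t' ∧ Z t t') ∧
    (∀ a t', N.R a s' t' → ∃ t, M.R a s t ∧ Z t t')

/-- Bisimilarity of pointed models. -/
def Bisimilar (M : KModel P A) (s : M.World) (N : KModel P A) (s' : N.World) : Prop :=
  ∃ Z, IsBisim M N Z ∧ Z s s'

/-- An action model: actions with accessibility relations and preconditions. -/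
structure AModel (P A : Type) : Type 1 where
  Action : Type
  rel : A → Action → Action → Prop
  pre : Action → Form P A

/-- The restricted modal product `M ⊗ E`. -/
def actProd (M : KModel P A) (E : AModel P A) : KModel P A :=
  ⟨{x : M.World × E.Action // Form.sat M x.1 (E.pre x.2)},
   fun a x y => M.R a x.1.1 y.1.1 ∧ E.rel a x.1.2 y.1.2,
   fun x p => M.V x.1.1 p⟩

/-- `M,s ⊨ [E,e]φ`: if the precondition of `e` holds at `s` then `φ` holds at `(s,e)`
in `M ⊗ E`. -/
def actSat (M : KModel P A) (E : AModel P A) (s : M.World) (e : E.Action)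
    (φ : Form P A) : Prop :=
  ∀ h : Form.sat M s (E.pre e), Form.sat (actProd M E) ⟨(s, e), h⟩ φ

/-!
The modalities are eliminated inside out. For modal `χ` and an update `U` with modal conditions,
`[U,o]χ` is modal by the reduction axioms, the one for boxes being
`[U,o]□_a φ ↔ ⋀_{(a,o,σ,o',τ) ∈ U} (σ → □_a (τ → [U,o']φ))`.
For `⟨↑⟩χ`, put `χ` in cover normal form: a disjunction of clauses `π ∧ ⋀_a ∇_a Φ_a` with `π`
propositional and the formulas of each `Φ_a` of smaller modal depth than `χ`. Then
`⟨↑⟩(π ∧ ⋀_a ∇_a Φ_a) ↔ π ∧ ⋀_a ⋀_{ψ ∈ Φ_a} ◇_a ⟨↑⟩ψ`, and induction on the depth finishes.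
For the hard direction, the updates witnessing the `⟨↑⟩ψ` are glued into one: from a fresh root
outcome, agent `a` gets an arrow into a disjoint copy of the update `(U_ψ, o_ψ)` witnessing `ψ`,
whose target condition is the modal translation of `[U_ψ, o_ψ]ψ`.
Finally, the conditions of any update can be replaced by equivalent modal ones, so `[↑]` in
effect ranges over all updates.
-/

-- Lets a pair `(s, o) : M.World × ℕ` be rewritten as a world of `prodModel M U`.
attribute [reducible] prodModel

@[simp] lemma sat_atom (M : KModel P A) (s : M.World) (p : P) :
    Form.sat M s (.atom p) ↔ M.V s p := by rw [Form.sat]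

@[simp] lemma sat_neg (M : KModel P A) (s : M.World) (φ : Form P A) :
    Form.sat M s (.neg φ) ↔ ¬ Form.sat M s φ := by rw [Form.sat]

@[simp] lemma sat_and (M : KModel P A) (s : M.World) (φ ψ : Form P A) :
    Form.sat M s (.and φ ψ) ↔ Form.sat M s φ ∧ Form.sat M s ψ := by rw [Form.sat]

@[simp] lemma sat_box (M : KModel P A) (s : M.World) (a : A) (φ : Form P A) :
    Form.sat M s (.box a φ) ↔ ∀ t, M.R a s t → Form.sat M t φ := by rw [Form.sat]

lemma sat_upd (M : KModel P A) (s : M.World) (U : List (Arrow P A)) (o : ℕ) (φ : Form P A) :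
    Form.sat M s (.upd U o φ) ↔ Form.sat (prodModel M U) (s, o) φ := by
  rw [Form.sat]

theorem Form.nonempty_atom : Form P A → Nonempty P
  | .atom p => ⟨p⟩
  | .neg φ | .and φ _ | .box _ φ | .upd _ _ φ | .all φ => φ.nonempty_atom

lemma satList_iff (M : KModel P A) (U : List (Arrow P A)) (a : A) (o o' : ℕ)
    (s t : M.World) :
    satList M U a o o' s t ↔ ∃ σ τ, (a, o, σ, o', τ) ∈ U ∧ Form.sat M s σ ∧ Form.sat M t τ := by
  induction U with
  | nil => simp [satList]
  | cons ar U ih =>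
    obtain ⟨b, o₁, σ, o₂, τ⟩ := ar
    rw [satList, ih]
    aesop

@[simp] lemma prodModel_R (M : KModel P A) (U : List (Arrow P A)) (a : A)
    (x y : M.World × ℕ) :
    (prodModel M U).R a x y ↔
      M.R a x.1 y.1 ∧ ∃ σ τ, (a, x.2, σ, y.2, τ) ∈ U ∧ Form.sat M x.1 σ ∧ Form.sat M y.1 τ := by
  rw [← satList_iff]

lemma Form.Modal.msat_iff {φ : Form P A} (h : φ.Modal) (M : KModel P A) (s : M.World) :
    msat M s φ ↔ Form.sat M s φ := by
  induction h generalizing s with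
  | atom p => simp [msat]
  | neg _ ih => simp [msat, ih]
  | and _ _ ih₁ ih₂ => simp [msat, ih₁, ih₂]
  | box a _ ih => simp [msat, ih]

lemma sat_all (M : KModel P A) (s : M.World) (φ : Form P A) :
    Form.sat M s (.all φ) ↔
      ∀ (U : List (Arrow P A)) (o : ℕ), ModalArrows U → Form.sat (prodModel M U) (s, o) φ := by
  rw [Form.sat]
  refine forall_congr' fun U => forall_congr' fun o => forall_congr' fun hU => ?_
  have hR : (fun a (x y : M.World × ℕ) => M.R a x.1 y.1 ∧ marrowOK M U a x.2 y.2 x.1 y.1) =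
      (prodModel M U).R := by
    ext a x y
    simp only [marrowOK, satList_iff]
    exact and_congr_right fun _ => exists₂_congr fun σ τ => and_congr_right fun hm =>
      and_congr ((hU _ hm).1.msat_iff M _) ((hU _ hm).2.msat_iff M _)
  rw [hR]

lemma Form.Modal.sat_iff_of_isBisim {φ : Form P A} (hφ : φ.Modal) {M N : KModel P A}
    {Z : M.World → N.World → Prop} (hZ : IsBisim M N Z) {s : M.World} {t : N.World}
    (hst : Z s t) : Form.sat M s φ ↔ Form.sat N t φ := by
  induction hφ generalizing s t with
  | atom p => simpa using (hZ s t hst).1 p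
  | neg _ ih => simp [ih hst]
  | and _ _ ih₁ ih₂ => simp [ih₁ hst, ih₂ hst]
  | box a _ ih =>
    obtain ⟨-, forth, back⟩ := hZ s t hst
    simp only [sat_box]
    constructor
    · intro h t' ht'
      obtain ⟨s', hs', hZ'⟩ := back a t' ht'
      exact (ih hZ').1 (h s' hs')
    · intro h s' hs'
      obtain ⟨t', ht', hZ'⟩ := forth a s' hs'
      exact (ih hZ').2 (h t' ht')

lemma Form.Prp.sat_iff_of_valuation {π : Form P A} (hπ : π.Prp) {M N : KModel P A}
    {s : M.World} {t : N.World} (hV : ∀ p, M.V s p ↔ N.V t p) :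
    Form.sat M s π ↔ Form.sat N t π := by
  induction hπ with
  | atom p => simpa using hV p
  | neg _ ih => simp [ih]
  | and _ _ ih₁ ih₂ => simp [ih₁, ih₂]

lemma Form.Prp.modal {π : Form P A} (hπ : π.Prp) : π.Modal := by
  induction hπ with
  | atom p => exact .atom p
  | neg _ ih => exact .neg ih
  | and _ _ ih₁ ih₂ => exact .and ih₁ ih₂

lemma Form.Prp.top [Inhabited P] : (Form.top : Form P A).Prp :=
  .neg (.and (.atom _) (.neg (.atom _)))

@[simp] lemma sat_top [Inhabited P] (M : KModel P A) (s : M.World) : Form.sat M s Form.top := by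
  simp [Form.top]

def ModallyDefinable (S : (M : KModel P A) → M.World → Prop) : Prop :=
  ∃ θ : Form P A, θ.Modal ∧ ∀ (M : KModel P A) (s : M.World), S M s ↔ Form.sat M s θ

namespace ModallyDefinable

variable {S T : (M : KModel P A) → M.World → Prop}

lemma of_modal {φ : Form P A} (hφ : φ.Modal) : ModallyDefinable fun M s => Form.sat M s φ :=
  ⟨φ, hφ, fun _ _ => Iff.rfl⟩

lemma of_iff (hS : ModallyDefinable S) (h : ∀ M s, T M s ↔ S M s) : ModallyDefinable T := by
  obtain ⟨θ, hθ, hS⟩ := hS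
  exact ⟨θ, hθ, fun M s => (h M s).trans (hS M s)⟩

lemma not (hS : ModallyDefinable S) : ModallyDefinable fun M s => ¬ S M s := by
  obtain ⟨θ, hθ, hS⟩ := hS
  exact ⟨.neg θ, .neg hθ, by simp [hS]⟩

lemma and (hS : ModallyDefinable S) (hT : ModallyDefinable T) :
    ModallyDefinable fun M s => S M s ∧ T M s := by
  obtain ⟨θ, hθ, hS⟩ := hS
  obtain ⟨η, hη, hT⟩ := hT
  exact ⟨.and θ η, .and hθ hη, by simp [hS, hT]⟩

lemma imp (hS : ModallyDefinable S) (hT : ModallyDefinable T) :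
    ModallyDefinable fun M s => S M s → T M s :=
  (hS.and hT.not).not.of_iff fun _ _ => by tauto

lemma box (a : A) (hS : ModallyDefinable S) :
    ModallyDefinable fun M s => ∀ t, M.R a s t → S M t := by
  obtain ⟨θ, hθ, hS⟩ := hS
  exact ⟨.box a θ, .box a hθ, by simp [hS]⟩

lemma dia (a : A) (hS : ModallyDefinable S) :
    ModallyDefinable fun M s => ∃ t, M.R a s t ∧ S M t :=
  (hS.not.box a).not.of_iff fun _ _ => by simp

variable [Inhabited P]

lemma top : ModallyDefinable fun (M : KModel P A) (_ : M.World) => True :=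
  ⟨Form.top, Form.Prp.top.modal, by simp⟩

lemma imp_const (p : Prop) (hS : ModallyDefinable S) :
    ModallyDefinable fun M s => p → S M s := by
  by_cases hp : p
  · exact hS.of_iff fun _ _ => by simp [hp]
  · exact ModallyDefinable.top.of_iff fun _ _ => by simp [hp]

lemma forall_mem {ι : Type*} (L : List ι) {S : ι → (M : KModel P A) → M.World → Prop}
    (hS : ∀ i ∈ L, ModallyDefinable (S i)) : ModallyDefinable fun M s => ∀ i ∈ L, S i M s := by
  induction L with
  | nil => exact ModallyDefinable.top.of_iff fun _ _ => by simp
  | cons i L ih =>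
    refine ((hS i (by simp)).and (ih fun j hj => hS j (by simp [hj]))).of_iff fun _ _ => ?_
    simp

lemma exists_mem {ι : Type*} (L : List ι) {S : ι → (M : KModel P A) → M.World → Prop}
    (hS : ∀ i ∈ L, ModallyDefinable (S i)) : ModallyDefinable fun M s => ∃ i ∈ L, S i M s :=
  (forall_mem L fun i hi => (hS i hi).not).not.of_iff fun _ _ => by simp

end ModallyDefinable

lemma sat_prodModel_box (M : KModel P A) (U : List (Arrow P A)) (s : M.World) (o : ℕ) (a : A)
    (φ : Form P A) :
    Form.sat (prodModel M U) (s, o) (.box a φ) ↔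
      ∀ ar ∈ U, ar.1 = a → ar.2.1 = o → Form.sat M s ar.2.2.1 →
        ∀ t, M.R a s t → Form.sat M t ar.2.2.2.2 → Form.sat (prodModel M U) (t, ar.2.2.2.1) φ := by
  rw [sat_box]
  constructor
  · rintro h ⟨b, o₁, σ, o₂, τ⟩ hm rfl rfl hσ t ht hτ
    exact h (t, o₂) ((prodModel_R ..).2 ⟨ht, σ, τ, hm, hσ, hτ⟩)
  · rintro h ⟨t, o₂⟩ hR
    obtain ⟨ht, σ, τ, hm, hσ, hτ⟩ := (prodModel_R ..).1 hR
    exact h _ hm rfl rfl hσ t ht hτ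

theorem modallyDefinable_sat_prodModel [Inhabited P] {U : List (Arrow P A)} (hU : ModalArrows U)
    {χ : Form P A} (hχ : χ.Modal) (o : ℕ) :
    ModallyDefinable fun M s => Form.sat (prodModel M U) (s, o) χ := by
  induction hχ generalizing o with
  | atom p => exact (ModallyDefinable.of_modal (.atom p)).of_iff fun _ _ => by simp
  | neg _ ih => exact (ih o).not.of_iff fun _ _ => sat_neg ..
  | and _ _ ih₁ ih₂ => exact ((ih₁ o).and (ih₂ o)).of_iff fun _ _ => sat_and ..
  | box a _ ih =>
    refine (ModallyDefinable.forall_mem U fun ar hm => ?_).of_iff fun M s =>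
      sat_prodModel_box M U s o a _
    exact .imp_const _ <| .imp_const _ <| (ModallyDefinable.of_modal (hU ar hm).1).imp <|
      .box a <| (ModallyDefinable.of_modal (hU ar hm).2).imp (ih _)

lemma sat_prodModel_congr {M : KModel P A} {U U' : List (Arrow P A)}
    (h : satList M U = satList M U') (x : M.World × ℕ) (φ : Form P A) :
    Form.sat (prodModel M U) x φ ↔ Form.sat (prodModel M U') x φ := by
  unfold prodModel; rw [h]

lemma exists_modalArrows_satList_eq {U : List (Arrow P A)}
    (hU : ∀ ar ∈ U, ModallyDefinable (fun M s => Form.sat M s ar.2.2.1) ∧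
      ModallyDefinable (fun M s => Form.sat M s ar.2.2.2.2)) :
    ∃ U', ModalArrows U' ∧ ∀ M : KModel P A, satList M U' = satList M U := by
  induction U with
  | nil => exact ⟨[], by simp [ModalArrows], fun _ => rfl⟩
  | cons ar U ih =>
    obtain ⟨b, o₁, σ, o₂, τ⟩ := ar
    obtain ⟨⟨σ', hσ', hσ⟩, ⟨τ', hτ', hτ⟩⟩ := hU _ List.mem_cons_self
    obtain ⟨U', hU', hsat⟩ := ih fun ar hm => hU ar (List.mem_cons_of_mem _ hm)
    refine ⟨(b, o₁, σ', o₂, τ') :: U', ?_, fun M => ?_⟩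
    · simpa [ModalArrows, hσ', hτ'] using hU'
    · ext a o o' s t
      simp only at hσ hτ
      rw [satList, satList, hsat, ← hσ, ← hτ]

def Form.depth : Form P A → ℕ
  | .atom _ => 0
  | .neg φ | .upd _ _ φ | .all φ => φ.depth
  | .and φ ψ => max φ.depth ψ.depth
  | .box _ φ => φ.depth + 1

section

variable [Inhabited P]

@[simp] lemma depth_top : (Form.top : Form P A).depth = 0 := rfl

def Form.disj (Φ : List (Form P A)) : Form P A := .neg (Form.conj (Φ.map .neg))

lemma sat_conj (M : KModel P A) (s : M.World) (Φ : List (Form P A)) :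
    Form.sat M s (Form.conj Φ) ↔ ∀ φ ∈ Φ, Form.sat M s φ := by
  induction Φ with
  | nil => simp [Form.conj]
  | cons φ Φ ih => simp [Form.conj, ih]

lemma sat_disj (M : KModel P A) (s : M.World) (Φ : List (Form P A)) :
    Form.sat M s (Form.disj Φ) ↔ ∃ φ ∈ Φ, Form.sat M s φ := by
  simp [Form.disj, sat_conj]

lemma Form.Modal.conj {Φ : List (Form P A)} (h : ∀ φ ∈ Φ, φ.Modal) : (Form.conj Φ).Modal := by
  induction Φ with
  | nil => exact Form.Prp.top.modal
  | cons φ Φ ih => exact .and (h φ (by simp)) (ih fun ψ hψ => h ψ (by simp [hψ]))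

lemma Form.Modal.disj {Φ : List (Form P A)} (h : ∀ φ ∈ Φ, φ.Modal) : (Form.disj Φ).Modal :=
  .neg (.conj (by simpa using fun φ hφ => (h φ hφ).neg))

lemma depth_conj_lt {Φ : List (Form P A)} {d : ℕ} (hd : 0 < d) (h : ∀ φ ∈ Φ, φ.depth < d) :
    (Form.conj Φ).depth < d := by
  induction Φ with
  | nil => exact hd
  | cons φ Φ ih => simpa [Form.conj, Form.depth, h φ] using ih fun ψ hψ => h ψ (by simp [hψ])

lemma depth_disj_lt {Φ : List (Form P A)} {d : ℕ} (hd : 0 < d) (h : ∀ φ ∈ Φ, φ.depth < d) :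
    (Form.disj Φ).depth < d :=
  depth_conj_lt hd (by simpa [Form.depth] using h)

end

/-- The cover modality `∇_a Φ`. -/
def Cover (M : KModel P A) (s : M.World) (a : A) (Φ : List (Form P A)) : Prop :=
  (∀ φ ∈ Φ, ∃ t, M.R a s t ∧ Form.sat M t φ) ∧ ∀ t, M.R a s t → ∃ φ ∈ Φ, Form.sat M t φ

def coverMerge [Inhabited P] (Φ Ψ : List (Form P A)) : List (Form P A) :=
  Φ.map (·.and (Form.disj Ψ)) ++ Ψ.map (·.and (Form.disj Φ))

lemma cover_coverMerge [Inhabited P] (M : KModel P A) (s : M.World) (a : A)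
    (Φ Ψ : List (Form P A)) :
    Cover M s a (coverMerge Φ Ψ) ↔ Cover M s a Φ ∧ Cover M s a Ψ := by
  simp only [Cover, coverMerge, List.mem_append, List.mem_map]
  constructor
  · rintro ⟨hdia, hbox⟩
    refine ⟨⟨fun φ hφ => ?_, fun t ht => ?_⟩, ⟨fun ψ hψ => ?_, fun t ht => ?_⟩⟩
    · obtain ⟨t, ht, hφt⟩ := hdia _ (.inl ⟨φ, hφ, rfl⟩)
      exact ⟨t, ht, ((sat_and ..).1 hφt).1⟩
    · obtain ⟨_, ⟨φ, hφ, rfl⟩ | ⟨ψ, -, rfl⟩, hχ⟩ := hbox t ht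
      · exact ⟨φ, hφ, ((sat_and ..).1 hχ).1⟩
      · exact (sat_disj ..).1 ((sat_and ..).1 hχ).2
    · obtain ⟨t, ht, hψt⟩ := hdia _ (.inr ⟨ψ, hψ, rfl⟩)
      exact ⟨t, ht, ((sat_and ..).1 hψt).1⟩
    · obtain ⟨_, ⟨φ, -, rfl⟩ | ⟨ψ, hψ, rfl⟩, hχ⟩ := hbox t ht
      · exact (sat_disj ..).1 ((sat_and ..).1 hχ).2
      · exact ⟨ψ, hψ, ((sat_and ..).1 hχ).1⟩
  · rintro ⟨⟨hdiaΦ, hboxΦ⟩, ⟨hdiaΨ, hboxΨ⟩⟩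
    refine ⟨?_, fun t ht => ?_⟩
    · rintro _ (⟨φ, hφ, rfl⟩ | ⟨ψ, hψ, rfl⟩)
      · obtain ⟨t, ht, hφt⟩ := hdiaΦ φ hφ
        exact ⟨t, ht, (sat_and ..).2 ⟨hφt, (sat_disj ..).2 (hboxΨ t ht)⟩⟩
      · obtain ⟨t, ht, hψt⟩ := hdiaΨ ψ hψ
        exact ⟨t, ht, (sat_and ..).2 ⟨hψt, (sat_disj ..).2 (hboxΦ t ht)⟩⟩
    · obtain ⟨φ, hφ, hφt⟩ := hboxΦ t ht
      exact ⟨_, .inl ⟨φ, hφ, rfl⟩, (sat_and ..).2 ⟨hφt, (sat_disj ..).2 (hboxΨ t ht)⟩⟩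

lemma modal_depth_lt_and_disj [Inhabited P] {φ : Form P A} {Ψ : List (Form P A)} {d : ℕ}
    (hφ : φ.Modal ∧ φ.depth < d) (hΨ : ∀ ψ ∈ Ψ, ψ.Modal ∧ ψ.depth < d) :
    (φ.and (Form.disj Ψ)).Modal ∧ (φ.and (Form.disj Ψ)).depth < d :=
  ⟨.and hφ.1 (.disj fun ψ hψ => (hΨ ψ hψ).1),
    max_lt hφ.2 (depth_disj_lt ((Nat.zero_le _).trans_lt hφ.2) fun ψ hψ => (hΨ ψ hψ).2)⟩

lemma modal_depth_lt_of_mem_coverMerge [Inhabited P] {Φ Ψ : List (Form P A)} {d : ℕ}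
    (hΦ : ∀ φ ∈ Φ, φ.Modal ∧ φ.depth < d) (hΨ : ∀ ψ ∈ Ψ, ψ.Modal ∧ ψ.depth < d) {χ : Form P A}
    (hχ : χ ∈ coverMerge Φ Ψ) : χ.Modal ∧ χ.depth < d := by
  simp only [coverMerge, List.mem_append, List.mem_map] at hχ
  obtain ⟨φ, hφ, rfl⟩ | ⟨ψ, hψ, rfl⟩ := hχ
  · exact modal_depth_lt_and_disj (hΦ φ hφ) hΨ
  · exact modal_depth_lt_and_disj (hΨ ψ hψ) hΦ

structure Clause (P A : Type) where
  prop : Form P A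
  agents : List A
  cover : A → List (Form P A)

namespace Clause

def Sat (c : Clause P A) (M : KModel P A) (s : M.World) : Prop :=
  Form.sat M s c.prop ∧ ∀ a ∈ c.agents, Cover M s a (c.cover a)

def Normal (d : ℕ) (c : Clause P A) : Prop :=
  c.prop.Prp ∧ ∀ a ∈ c.agents, ∀ ψ ∈ c.cover a, ψ.Modal ∧ ψ.depth < d

lemma Normal.mono {d d' : ℕ} {c : Clause P A} (hc : c.Normal d) (h : d ≤ d') : c.Normal d' :=
  ⟨hc.1, fun a ha ψ hψ => ⟨(hc.2 a ha ψ hψ).1, (hc.2 a ha ψ hψ).2.trans_le h⟩⟩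

variable [Inhabited P]

open Classical in
noncomputable def conj (c₁ c₂ : Clause P A) : Clause P A where
  prop := c₁.prop.and c₂.prop
  agents := c₁.agents ++ c₂.agents
  cover a :=
    if a ∈ c₁.agents then
      if a ∈ c₂.agents then coverMerge (c₁.cover a) (c₂.cover a) else c₁.cover a
    else c₂.cover a

lemma sat_conj (c₁ c₂ : Clause P A) (M : KModel P A) (s : M.World) :
    (c₁.conj c₂).Sat M s ↔ c₁.Sat M s ∧ c₂.Sat M s := by
  have hcover (a : A) : (a ∈ c₁.agents ++ c₂.agents → Cover M s a ((c₁.conj c₂).cover a)) ↔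
      (a ∈ c₁.agents → Cover M s a (c₁.cover a)) ∧ (a ∈ c₂.agents → Cover M s a (c₂.cover a)) := by
    simp only [conj, List.mem_append]
    split_ifs <;> simp [*, cover_coverMerge]
  exact (and_congr (sat_and ..) ((forall_congr' hcover).trans forall_and)).trans and_and_and_comm

lemma Normal.conj {d₁ d₂ : ℕ} {c₁ c₂ : Clause P A} (h₁ : c₁.Normal d₁) (h₂ : c₂.Normal d₂) :
    (c₁.conj c₂).Normal (max d₁ d₂) := by
  have h₁' := (h₁.mono (le_max_left d₁ d₂)).2
  have h₂' := (h₂.mono (le_max_right d₁ d₂)).2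
  refine ⟨.and h₁.1 h₂.1, fun a ha ψ hψ => ?_⟩
  simp only [Clause.conj] at hψ
  split_ifs at hψ with ha₁ ha₂
  · exact modal_depth_lt_of_mem_coverMerge (h₁' a ha₁) (h₂' a ha₂) hψ
  · exact h₁' a ha₁ ψ hψ
  · exact h₂' a ((List.mem_append.1 ha).resolve_left ha₁) ψ hψ

end Clause

def IsNormalForm (d : ℕ) (χ : Form P A) (cs : List (Clause P A)) : Prop :=
  (∀ c ∈ cs, c.Normal d) ∧ ∀ (M : KModel P A) (s : M.World), Form.sat M s χ ↔ ∃ c ∈ cs, c.Sat M s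

namespace IsNormalForm

variable {d d₁ d₂ : ℕ} {φ ψ : Form P A} {cs cs₁ cs₂ : List (Clause P A)}

lemma of_iff (h : IsNormalForm d φ cs) (hψ : ∀ (M : KModel P A) s, Form.sat M s ψ ↔ Form.sat M s φ) :
    IsNormalForm d ψ cs :=
  ⟨h.1, fun M s => (hψ M s).trans (h.2 M s)⟩

lemma atom (p : P) : IsNormalForm d (.atom p : Form P A) [⟨.atom p, [], fun _ => []⟩] :=
  ⟨by simp [Clause.Normal, Form.Prp.atom], by simp [Clause.Sat]⟩

lemma neg_atom (p : P) :
    IsNormalForm d (.neg (.atom p) : Form P A) [⟨.neg (.atom p), [], fun _ => []⟩] :=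
  ⟨by simp [Clause.Normal, Form.Prp.atom, Form.Prp.neg], by simp [Clause.Sat]⟩

lemma or (h₁ : IsNormalForm d₁ φ cs₁) (h₂ : IsNormalForm d₂ ψ cs₂) :
    IsNormalForm (max d₁ d₂) (φ.or ψ) (cs₁ ++ cs₂) := by
  refine ⟨fun c hc => ?_, fun M s => ?_⟩
  · obtain hc | hc := List.mem_append.1 hc
    · exact (h₁.1 c hc).mono (le_max_left _ _)
    · exact (h₂.1 c hc).mono (le_max_right _ _)
  · simp only [Form.or, sat_neg, sat_and, h₁.2, h₂.2, List.mem_append]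
    grind

variable [Inhabited P]

lemma and (h₁ : IsNormalForm d₁ φ cs₁) (h₂ : IsNormalForm d₂ ψ cs₂) :
    IsNormalForm (max d₁ d₂) (φ.and ψ) (cs₁.flatMap fun c₁ => cs₂.map c₁.conj) := by
  refine ⟨fun c hc => ?_, fun M s => ?_⟩
  · simp only [List.mem_flatMap, List.mem_map] at hc
    obtain ⟨c₁, hc₁, c₂, hc₂, rfl⟩ := hc
    exact (h₁.1 c₁ hc₁).conj (h₂.1 c₂ hc₂)
  · simp only [sat_and, h₁.2, h₂.2, List.mem_flatMap, List.mem_map]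
    constructor
    · rintro ⟨⟨c₁, hc₁, hs₁⟩, c₂, hc₂, hs₂⟩
      exact ⟨_, ⟨c₁, hc₁, c₂, hc₂, rfl⟩, (Clause.sat_conj ..).2 ⟨hs₁, hs₂⟩⟩
    · rintro ⟨_, ⟨c₁, hc₁, c₂, hc₂, rfl⟩, hs⟩
      obtain ⟨hs₁, hs₂⟩ := (Clause.sat_conj ..).1 hs
      exact ⟨⟨c₁, hc₁, hs₁⟩, c₂, hc₂, hs₂⟩

lemma box (a : A) (hφ : φ.Modal) :
    IsNormalForm (φ.depth + 1) (.box a φ)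
      [⟨Form.top, [a], fun _ => [φ]⟩, ⟨Form.top, [a], fun _ => []⟩] := by
  refine ⟨by simp [Clause.Normal, Form.Prp.top, hφ], fun M s => ?_⟩
  simp [Clause.Sat, Cover]
  grind

lemma neg_box (a : A) (hφ : φ.Modal) :
    IsNormalForm (φ.depth + 1) (.neg (.box a φ)) [⟨Form.top, [a], fun _ => [.neg φ, Form.top]⟩] := by
  refine ⟨by simp [Clause.Normal, Form.Prp.top, Form.Prp.top.modal, hφ.neg, Form.depth], fun M s => ?_⟩
  simp [Clause.Sat, Cover]
  exact fun t ht _ => ⟨t, ht⟩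

end IsNormalForm

theorem Form.Modal.exists_isNormalForm [Inhabited P] {χ : Form P A} (hχ : χ.Modal) :
    ∃ cs ncs, IsNormalForm χ.depth χ cs ∧ IsNormalForm χ.depth (.neg χ) ncs := by
  induction hχ with
  | atom p => exact ⟨_, _, .atom p, .neg_atom p⟩
  | neg _ ih =>
    obtain ⟨cs, ncs, h, hn⟩ := ih
    exact ⟨ncs, cs, hn, h.of_iff fun _ _ => by simp⟩
  | and _ _ ih₁ ih₂ =>
    obtain ⟨cs₁, ncs₁, h₁, hn₁⟩ := ih₁
    obtain ⟨cs₂, ncs₂, h₂, hn₂⟩ := ih₂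
    exact ⟨_, _, h₁.and h₂, (hn₁.or hn₂).of_iff fun _ _ => by simp [Form.or]⟩
  | box a hφ => exact ⟨_, _, .box a hφ, .neg_box a hφ⟩

/-- `M,s ⊨ ⟨↑⟩φ` -/
def ExUpdSat (M : KModel P A) (s : M.World) (φ : Form P A) : Prop :=
  ∃ (U : List (Arrow P A)) (o : ℕ), ModalArrows U ∧ Form.sat (prodModel M U) (s, o) φ

lemma isBisim_prodModel_of_block (M : KModel P A) {U V : List (Arrow P A)} (k : ℕ)
    (hV : ∀ b n σ o' τ, (b, Nat.pair k n, σ, o', τ) ∈ V ↔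
      ∃ m, o' = Nat.pair k m ∧ (b, n, σ, m, τ) ∈ U) :
    IsBisim (prodModel M U) (prodModel M V) fun x y => y = (x.1, Nat.pair k x.2) := by
  rintro ⟨w, n⟩ _ rfl
  refine ⟨fun _ => Iff.rfl, ?_, ?_⟩
  · rintro a ⟨v, m⟩ hR
    obtain ⟨hwv, σ, τ, hm, hσ, hτ⟩ := (prodModel_R ..).1 hR
    exact ⟨(v, Nat.pair k m), (prodModel_R ..).2 ⟨hwv, σ, τ, (hV ..).2 ⟨m, rfl, hm⟩, hσ, hτ⟩, rfl⟩
  · rintro a ⟨v, o'⟩ hR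
    obtain ⟨hwv, σ, τ, hm, hσ, hτ⟩ := (prodModel_R ..).1 hR
    obtain ⟨m, rfl, hmU⟩ := (hV ..).1 hm
    exact ⟨(v, m), (prodModel_R ..).2 ⟨hwv, σ, τ, hmU, hσ, hτ⟩, rfl⟩

section RootedSum

variable [Inhabited P] {n : ℕ}

/-- From the root outcome `Nat.pair 0 0`, agent `a i` gets an arrow, guarded by the target
condition `θ i`, into a copy of `U i` entered at outcome `o i`; the copy of `U i` lives on the
outcomes `Nat.pair (i + 1) _`. -/
def rootedSum (a : Fin n → A) (θ : Fin n → Form P A) (U : Fin n → List (Arrow P A))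
    (o : Fin n → ℕ) : List (Arrow P A) :=
  (List.finRange n).flatMap fun i =>
    (a i, Nat.pair 0 0, Form.top, Nat.pair (i + 1) (o i), θ i) ::
      (U i).map fun ar =>
        (ar.1, Nat.pair (i + 1) ar.2.1, ar.2.2.1, Nat.pair (i + 1) ar.2.2.2.1, ar.2.2.2.2)

variable {a : Fin n → A} {θ : Fin n → Form P A} {U : Fin n → List (Arrow P A)} {o : Fin n → ℕ}

lemma mem_rootedSum_root {b : A} {σ : Form P A} {o' : ℕ} {τ : Form P A} :
    (b, Nat.pair 0 0, σ, o', τ) ∈ rootedSum a θ U o ↔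
      ∃ i, b = a i ∧ σ = Form.top ∧ o' = Nat.pair (i + 1) (o i) ∧ τ = θ i := by
  simp [rootedSum, Nat.pair_eq_pair, eq_comm]

lemma mem_rootedSum_block (i : Fin n) {b : A} {m : ℕ} {σ : Form P A} {o' : ℕ} {τ : Form P A} :
    (b, Nat.pair (i + 1) m, σ, o', τ) ∈ rootedSum a θ U o ↔
      ∃ m', o' = Nat.pair (i + 1) m' ∧ (b, m, σ, m', τ) ∈ U i := by
  simp only [rootedSum, List.mem_flatMap, List.mem_cons, List.mem_map, Prod.mk.injEq,
    Nat.pair_eq_pair, List.mem_finRange, true_and]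
  constructor
  · rintro ⟨j, ⟨-, ⟨h, -⟩, -⟩ | ⟨⟨b', m', σ', m'', τ'⟩, hm, rfl, ⟨hij, rfl⟩, rfl, rfl, rfl⟩⟩
    · omega
    · obtain rfl : j = i := Fin.ext (by omega)
      exact ⟨m'', rfl, hm⟩
  · rintro ⟨m', rfl, hm⟩
    exact ⟨i, Or.inr ⟨_, hm, rfl, ⟨rfl, rfl⟩, rfl, rfl, rfl⟩⟩

lemma modalArrows_rootedSum (hθ : ∀ i, (θ i).Modal) (hU : ∀ i, ModalArrows (U i)) :
    ModalArrows (rootedSum a θ U o) := by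
  simp only [ModalArrows, rootedSum, List.mem_flatMap, List.mem_cons, List.mem_map]
  rintro _ ⟨i, -, rfl | ⟨ar, hm, rfl⟩⟩
  · exact ⟨Form.Prp.top.modal, hθ i⟩
  · exact hU i ar hm

end RootedSum

theorem exists_update_successors [Inhabited P] {M : KModel P A} {s : M.World} {n : ℕ}
    (a : Fin n → A) (ψ : Fin n → Form P A) (hψ : ∀ i, (ψ i).Modal)
    (h : ∀ i, ∃ t, M.R (a i) s t ∧ ExUpdSat M t (ψ i)) :
    ∃ (V : List (Arrow P A)) (o : ℕ), ModalArrows V ∧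
      (∀ i, ∃ y, (prodModel M V).R (a i) (s, o) y ∧ Form.sat (prodModel M V) y (ψ i)) ∧
      ∀ b y, (prodModel M V).R b (s, o) y → ∃ i, a i = b ∧ Form.sat (prodModel M V) y (ψ i) := by
  choose t ht U o hU hsat using h
  choose θ hθ hθsat using fun i => modallyDefinable_sat_prodModel (hU i) (hψ i) (o i)
  have block (i : Fin n) (w : M.World) (m : ℕ) :
      Form.sat (prodModel M (rootedSum a θ U o)) (w, Nat.pair (i + 1) m) (ψ i) ↔
        Form.sat (prodModel M (U i)) (w, m) (ψ i) :=
    ((hψ i).sat_iff_of_isBisim (s := (w, m))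
      (isBisim_prodModel_of_block M _ fun _ _ _ _ _ => mem_rootedSum_block i) rfl).symm
  refine ⟨rootedSum a θ U o, Nat.pair 0 0, modalArrows_rootedSum hθ hU, fun i => ?_, ?_⟩
  · refine ⟨(t i, Nat.pair (i + 1) (o i)), (prodModel_R ..).2 ⟨ht i, Form.top, θ i, ?_, ?_⟩,
      (block ..).2 (hsat i)⟩
    · exact mem_rootedSum_root.2 ⟨i, rfl, rfl, rfl, rfl⟩
    · exact ⟨sat_top .., (hθsat i M (t i)).1 (hsat i)⟩
  · rintro b ⟨v, m⟩ hR
    obtain ⟨-, σ, τ, hm, -, hτ⟩ := (prodModel_R ..).1 hR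
    obtain ⟨i, rfl, -, rfl, rfl⟩ := mem_rootedSum_root.1 hm
    exact ⟨i, rfl, (block ..).2 ((hθsat i M v).2 hτ)⟩

lemma exists_update_clause_sat_iff [Inhabited P] {c : Clause P A} {d : ℕ} (hc : c.Normal d)
    (M : KModel P A) (s : M.World) :
    (∃ (U : List (Arrow P A)) (o : ℕ), ModalArrows U ∧ c.Sat (prodModel M U) (s, o)) ↔
      Form.sat M s c.prop ∧ ∀ a ∈ c.agents, ∀ ψ ∈ c.cover a, ∃ t, M.R a s t ∧ ExUpdSat M t ψ := by
  have hprop (U : List (Arrow P A)) (o : ℕ) :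
      Form.sat (prodModel M U) (s, o) c.prop ↔ Form.sat M s c.prop :=
    hc.1.sat_iff_of_valuation fun _ => Iff.rfl
  constructor
  · rintro ⟨U, o, hU, hπ, hcov⟩
    refine ⟨(hprop U o).1 hπ, fun a ha ψ hψ => ?_⟩
    obtain ⟨⟨t, o'⟩, ht, hψt⟩ := (hcov a ha).1 ψ hψ
    exact ⟨t, ((prodModel_R ..).1 ht).1, U, o', hU, hψt⟩
  · rintro ⟨hπ, h⟩
    set J := c.agents.flatMap fun a => (c.cover a).map (a, ·)
    have hJ (j : A × Form P A) : j ∈ J ↔ j.1 ∈ c.agents ∧ j.2 ∈ c.cover j.1 := by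
      obtain ⟨a, ψ⟩ := j
      simp [J]
    have hJi (i : Fin J.length) := (hJ _).1 (List.getElem_mem i.2)
    obtain ⟨U, o, hU, hsucc, hexh⟩ := exists_update_successors (fun i : Fin J.length => J[i].1)
      (fun i => J[i].2) (fun i => (hc.2 _ (hJi i).1 _ (hJi i).2).1)
      (fun i => h _ (hJi i).1 _ (hJi i).2)
    refine ⟨U, o, hU, (hprop U o).2 hπ, fun a ha => ⟨fun ψ hψ => ?_, fun y hy => ?_⟩⟩
    · obtain ⟨i, hi, hiJ⟩ := List.mem_iff_getElem.1 ((hJ (a, ψ)).2 ⟨ha, hψ⟩)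
      simpa [hiJ] using hsucc ⟨i, hi⟩
    · obtain ⟨i, rfl, hψy⟩ := hexh a y hy
      exact ⟨_, (hJi i).2, hψy⟩

theorem modallyDefinable_exUpdSat [Inhabited P] {χ : Form P A} (hχ : χ.Modal) :
    ModallyDefinable fun M s => ExUpdSat M s χ := by
  induction hd : χ.depth using Nat.strong_induction_on generalizing χ with
  | _ d ih =>
  obtain ⟨cs, -, hcs, -⟩ := hχ.exists_isNormalForm
  have hclause : ∀ c ∈ cs, ModallyDefinable fun M s =>
      ∃ (U : List (Arrow P A)) (o : ℕ), ModalArrows U ∧ c.Sat (prodModel M U) (s, o) := by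
    intro c hc
    have hc := hcs.1 c hc
    refine (ModallyDefinable.and (.of_modal hc.1.modal) ?_).of_iff (exists_update_clause_sat_iff hc)
    refine .forall_mem _ fun a ha => .forall_mem _ fun ψ hψ => .dia a ?_
    exact ih _ (hd ▸ (hc.2 a ha ψ hψ).2) (hc.2 a ha ψ hψ).1 rfl
  refine (ModallyDefinable.exists_mem cs hclause).of_iff fun M s => ?_
  simp only [ExUpdSat, hcs.2]
  aesop

theorem modallyDefinable_sat [Inhabited P] :
    ∀ φ : Form P A, ModallyDefinable fun M s => Form.sat M s φ
  | .atom p => .of_modal (.atom p)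
  | .neg φ => (modallyDefinable_sat φ).not.of_iff fun _ _ => sat_neg ..
  | .and φ ψ => ((modallyDefinable_sat φ).and (modallyDefinable_sat ψ)).of_iff fun _ _ => sat_and ..
  | .box a φ => ((modallyDefinable_sat φ).box a).of_iff fun _ _ => sat_box ..
  | .upd U o φ => by
    obtain ⟨U', hU', hUU'⟩ := exists_modalArrows_satList_eq fun ar har =>
      ⟨modallyDefinable_sat ar.2.2.1, modallyDefinable_sat ar.2.2.2.2⟩
    obtain ⟨φ', hφ', hφ⟩ := modallyDefinable_sat φ
    exact (modallyDefinable_sat_prodModel hU' hφ' o).of_iff fun M s => by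
      rw [sat_upd, ← sat_prodModel_congr (hUU' M)]
      exact hφ _ _
  | .all φ => by
    obtain ⟨φ', hφ', hφ⟩ := modallyDefinable_sat φ
    exact (modallyDefinable_exUpdSat hφ'.neg).not.of_iff fun M s => by
      simp only [sat_all, ExUpdSat, sat_neg, hφ, not_exists, not_and, not_not]
termination_by φ => sizeOf φ
decreasing_by
  all_goals simp_wf
  all_goals first
    | omega
    | have := List.sizeOf_lt_of_mem har
      obtain ⟨b, o₁, σ, o₂, τ⟩ := ar
      simp at this ⊢
      omega

/-- every formula of arbitrary arrow update model logic is
semantically equivalent to a basic modal formula; consequently `M,s ⊨ [↑]φ` iff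
`M,s ⊨ [U,o]φ` for every arrow update `(U,o)`, without any restriction on the
source and target conditions of `U`. -/
theorem aauml_reduction (P A : Type) :
    (∀ φ : Form P A, ∃ φ' : Form P A, φ'.Modal ∧
      ∀ (M : KModel P A) (s : M.World), Form.sat M s φ ↔ Form.sat M s φ') ∧
    (∀ (φ : Form P A) (M : KModel P A) (s : M.World),
      Form.sat M s (.all φ) ↔
        ∀ (U : List (Arrow P A)) (o : ℕ), Form.sat M s (.upd U o φ)) := by
  refine ⟨fun φ => ?_, fun φ M s => ?_⟩ <;> have : Nonempty P := φ.nonempty_atom <;> inhabit P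
  · exact modallyDefinable_sat φ
  · rw [sat_all]
    refine ⟨fun h U o => ?_, fun h U o _ => (sat_upd ..).1 (h U o)⟩
    obtain ⟨U', hU', hUU'⟩ := exists_modalArrows_satList_eq (U := U) fun ar _ =>
      ⟨modallyDefinable_sat ar.2.2.1, modallyDefinable_sat ar.2.2.2.2⟩
    rw [sat_upd, ← sat_prodModel_congr (hUU' M)]
    exact h U' o hU'

end AAUML
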